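/- arXiv:1805.10911 — 3 statements merged into one kernel-verified Lean document; each statement's English description precedes it below -/
import Mathlib

section
/- Let G be a bipartite graph with parts A, B of size n with e(G) ≥ d·n². Then there exist A₁ ⊆ A and B₁ ⊆ B with |A₁| = |B₁| ≥ d^{60}·n/3 such that the induced bipartite graph G₁ = G[A₁,B₁] has minimum degree at least 10^{-3}·d·|A₁|, and for every S ⊆ A₁ and every S ⊆ B₁ we have |N_{G₁}(S)| ≥ min{2|S|, 2|A₁|/3}. -/
open Finset Function

/-!
Among all balanced pairs `(X, Y)` with `X` nonempty choose one maximising the potential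
`e(X, Y) ^ 30 / |X| ^ 59`. The whole graph has potential at least `d ^ 30 n`, and a pair with `k`
vertices per side has potential at most `k`, so the maximiser has `k ≥ d ^ 30 n` and density at
least `d`. Deleting a vertex `a ∈ X` together with a vertex of minimum degree in `Y` may not raise
the potential; since `59 / 30 > 9 / 5` this forces `deg a ≥ 4 e / 5 k`, and symmetrically on `Y`.
If some `S ⊆ X` with `3 |S| ≤ k + 2` had fewer than `2 |S|` neighbours, a balanced subpair of
`(S, N(S))` of size `k' = min |S| |N(S)|` would carry at least `2 e k' / 5 k` edges, and its
potential would exceed the maximum because `(2 / 5) ^ 30 * 3 ^ 29 > 1`. Larger sets contain a set of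
size `⌈k / 3⌉`. When `d ^ 60 n ≤ 3` a single edge already works.
-/

theorem pow_mul_sub_le_sub_pow {x c : ℝ} (hc : 0 ≤ c) (hcx : c ≤ x) (m : ℕ) :
    x ^ m * (x - (m + 1) * c) ≤ (x - c) ^ (m + 1) := by
  induction m with
  | zero => simp
  | succ m ih =>
    have hx : 0 ≤ x := hc.trans hcx
    calc x ^ (m + 1) * (x - (↑(m + 1) + 1) * c)
        ≤ x ^ m * (x - (m + 1) * c) * (x - c) := by
          have : 0 ≤ x ^ m * ((m + 1) * c ^ 2) := by positivity
          push_cast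
          linarith [show x ^ m * (x - (m + 1) * c) * (x - c) =
            x ^ (m + 1) * (x - (m + 1 + 1) * c) + x ^ m * ((m + 1) * c ^ 2) by ring]
      _ ≤ (x - c) ^ (m + 1) * (x - c) := mul_le_mul_of_nonneg_right ih (by linarith)
      _ = (x - c) ^ (m + 1 + 1) := (pow_succ _ _).symm

theorem sub_one_pow_mul_le_pow {x : ℝ} (hx : 1 ≤ x) (m : ℕ) :
    (x - 1) ^ m * (x + m) ≤ x ^ (m + 1) := by
  induction m with
  | zero => simp
  | succ m ih =>
    have : 0 ≤ (x - 1) ^ m * (m + 1) := by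
      have : 0 ≤ x - 1 := by linarith
      positivity
    calc (x - 1) ^ (m + 1) * (x + ↑(m + 1))
        ≤ (x - 1) ^ m * (x + m) * x := by
          push_cast
          nlinarith [pow_succ (x - 1) m]
      _ ≤ x ^ (m + 1) * x := mul_le_mul_of_nonneg_right ih (by linarith)
      _ = x ^ (m + 1 + 1) := (pow_succ _ _).symm

theorem five_pow_mul_sub_one_pow_le {k : ℝ} (hk : 1000 ≤ k) :
    5 ^ 30 * (k - 1) ^ 59 ≤ (5 * k - 9) ^ 30 * k ^ 29 := by
  have hupper := sub_one_pow_mul_le_pow (x := k) (by linarith) 58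
  have hlower := pow_mul_sub_le_sub_pow (x := 5 * k) (c := 9) (by norm_num) (by linarith) 29
  push_cast at hupper hlower
  have hk1 : 0 ≤ k - 1 := by linarith
  refine le_of_mul_le_mul_right ?_ (by linarith : (0 : ℝ) < k + 58)
  calc 5 ^ 30 * (k - 1) ^ 59 * (k + 58) = 5 ^ 30 * (k - 1) * ((k - 1) ^ 58 * (k + 58)) := by ring
    _ ≤ 5 ^ 30 * (k - 1) * k ^ 59 := by gcongr
    _ ≤ 5 ^ 30 * ((k - 54) * (k + 58)) * k ^ 58 := by
        rw [pow_succ]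
        have : (k - 1) * k ≤ (k - 54) * (k + 58) := by nlinarith
        nlinarith [pow_pos (by linarith : (0:ℝ) < k) 58]
    _ = (5 * k) ^ 29 * (5 * k - (29 + 1) * 9) * k ^ 29 * (k + 58) := by ring
    _ ≤ (5 * k - 9) ^ 30 * k ^ 29 * (k + 58) := by gcongr

theorem pow_mul_pow_lt_of_two_mul_le {k n e e₁ : ℝ} (hn : 0 < n) (hnk : 30 * n ≤ 11 * k)
    (he : 0 < e) (h : 2 * e * n ≤ 5 * k * e₁) : e ^ 30 * n ^ 59 < e₁ ^ 30 * k ^ 59 := by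
  have hk : 0 < k := by linarith
  have hratio : 5 ^ 30 * n ^ 29 < 2 ^ 30 * k ^ 29 := by
    have : (30 * n) ^ 29 ≤ (11 * k) ^ 29 := by gcongr
    have : (5 : ℝ) ^ 30 * 11 ^ 29 < 2 ^ 30 * 30 ^ 29 := by norm_num
    rw [mul_pow, mul_pow] at *
    nlinarith [pow_pos hk 29]
  have hpow : (2 * e * n) ^ 30 ≤ (5 * k * e₁) ^ 30 := by gcongr
  refine lt_of_mul_lt_mul_left (a := (5 : ℝ) ^ 30 * 2 ^ 30) ?_ (by positivity)
  calc 5 ^ 30 * 2 ^ 30 * (e ^ 30 * n ^ 59)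
      = (5 ^ 30 * n ^ 29) * (2 * e * n) ^ 30 := by ring
    _ < (2 ^ 30 * k ^ 29) * (2 * e * n) ^ 30 := by gcongr
    _ ≤ (2 ^ 30 * k ^ 29) * (5 * k * e₁) ^ 30 := by gcongr
    _ = _ := by ring

theorem thousand_le_pow_mul {d n : ℝ} (hd : 0 ≤ d) (hn : 10 ^ 6 ≤ n) (h : 3 < d ^ 60 * n) :
    1000 ≤ d ^ 30 * n := by
  refine (pow_le_pow_iff_left₀ (by norm_num)
    (mul_nonneg (pow_nonneg hd 30) (by linarith)) two_ne_zero).1 ?_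
  calc (1000 : ℝ) ^ 2 ≤ 3 * 10 ^ 6 := by norm_num
    _ ≤ d ^ 60 * n * n := mul_le_mul h.le hn (by norm_num) (by linarith)
    _ = (d ^ 30 * n) ^ 2 := by ring

theorem four_mul_le_of_pow_mul_le {k e e' x y : ℝ} (hk : 1000 ≤ k) (hx : 0 ≤ x)
    (hy : k * y ≤ e) (hsplit : e ≤ e' + x + y)
    (hmax : e' ^ 30 * k ^ 59 ≤ e ^ 30 * (k - 1) ^ 59) : 4 * e ≤ 5 * k * x := by
  by_contra! hlt
  have hk0 : 0 < k := by linarith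
  have he : 0 < e := by nlinarith
  have hlow : e * (5 * k - 9) < 5 * k * e' := by nlinarith
  have hcontra : (e * (5 * k - 9)) ^ 30 * k ^ 59 < (e * (5 * k - 9)) ^ 30 * k ^ 59 :=
    calc (e * (5 * k - 9)) ^ 30 * k ^ 59
        < (5 * k * e') ^ 30 * k ^ 59 := by gcongr; nlinarith
      _ = 5 ^ 30 * k ^ 30 * (e' ^ 30 * k ^ 59) := by ring
      _ ≤ 5 ^ 30 * k ^ 30 * (e ^ 30 * (k - 1) ^ 59) := by gcongr
      _ = k ^ 30 * e ^ 30 * (5 ^ 30 * (k - 1) ^ 59) := by ring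
      _ ≤ k ^ 30 * e ^ 30 * ((5 * k - 9) ^ 30 * k ^ 29) := by
          exact mul_le_mul_of_nonneg_left (five_pow_mul_sub_one_pow_le hk) (by positivity)
      _ = _ := by ring
  exact lt_irrefl _ hcontra

namespace Rel

variable {α β : Type*} (r : α → β → Prop) [∀ a b, Decidable (r a b)]

theorem card_interedges_eq_sum_card_bipartiteAbove (s : Finset α) (t : Finset β) :
    #(interedges r s t) = ∑ a ∈ s, #(t.bipartiteAbove r a) := by
  simp only [interedges, bipartiteAbove, card_filter, sum_product]

theorem card_interedges_eq_sum_card_bipartiteBelow (s : Finset α) (t : Finset β) :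
    #(interedges r s t) = ∑ b ∈ t, #(s.bipartiteBelow r b) := by
  rw [card_interedges_eq_sum_card_bipartiteAbove,
    sum_card_bipartiteAbove_eq_sum_card_bipartiteBelow]

theorem card_interedges_swap (s : Finset α) (t : Finset β) :
    #(interedges (swap r) t s) = #(interedges r s t) := by
  rw [card_interedges_eq_sum_card_bipartiteAbove, card_interedges_eq_sum_card_bipartiteBelow]
  rfl

theorem exists_card_mul_card_bipartiteBelow_le (s : Finset α) {t : Finset β} (ht : t.Nonempty) :
    ∃ b ∈ t, #t * #(s.bipartiteBelow r b) ≤ #(interedges r s t) := by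
  refine exists_le_of_sum_le ht ?_
  rw [sum_const, smul_eq_mul, ← mul_sum, card_interedges_eq_sum_card_bipartiteBelow]

theorem card_interedges_erase_right_add [DecidableEq β] (s : Finset α) {t : Finset β} {b : β}
    (hb : b ∈ t) :
    #(interedges r s (t.erase b)) + #(s.bipartiteBelow r b) = #(interedges r s t) := by
  simp only [card_interedges_eq_sum_card_bipartiteBelow, sum_erase_add _ _ hb]

theorem card_interedges_le_erase_erase [DecidableEq α] [DecidableEq β] (s : Finset α)
    (t : Finset β) (a : α) (b : β) :
    #(interedges r s t) ≤
      #(interedges r (s.erase a) (t.erase b)) + #(t.bipartiteAbove r a) +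
        #(s.bipartiteBelow r b) := by
  have hsub : interedges r s t ⊆ interedges r (s.erase a) (t.erase b) ∪
      ({a} ×ˢ t.bipartiteAbove r a ∪ s.bipartiteBelow r b ×ˢ {b}) := by
    rintro ⟨x, y⟩ hxy
    rw [mk_mem_interedges_iff] at hxy
    by_cases hx : x = a <;> by_cases hy : y = b <;>
      simp_all [mk_mem_interedges_iff]
  have hunion := (card_le_card hsub).trans (card_union_le _ _)
  have hpieces := card_union_le ({a} ×ˢ t.bipartiteAbove r a) (s.bipartiteBelow r b ×ˢ {b})
  simp only [card_product, card_singleton, one_mul, mul_one] at hpieces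
  omega

theorem exists_dense_subset_right [DecidableEq β] (s : Finset α) {m : ℕ} (t : Finset β)
    (hm : m ≤ #t) :
    ∃ t' ⊆ t, #t' = m ∧ #(interedges r s t) * m ≤ #(interedges r s t') * #t := by
  induction t using Finset.strongInduction with
  | H t ih =>
  obtain rfl | hm0 := m.eq_zero_or_pos
  · exact ⟨∅, empty_subset _, card_empty, by simp⟩
  obtain rfl | hmt := hm.eq_or_lt
  · exact ⟨t, subset_rfl, rfl, le_rfl⟩
  obtain ⟨b, hb, hb_min⟩ :=
    exists_card_mul_card_bipartiteBelow_le r s (t := t) (card_pos.1 (by omega))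
  have hsplit := card_interedges_erase_right_add r s hb
  have hcard := card_erase_add_one hb
  obtain ⟨t', ht', rfl, hdense⟩ := ih _ (erase_ssubset hb) (by omega)
  refine ⟨t', ht'.trans (erase_subset _ _), rfl, ?_⟩
  -- deleting a vertex of minimum degree does not lower the density
  have herase : #(interedges r s t) * #(t.erase b) ≤ #(interedges r s (t.erase b)) * #t := by
    have h := hb_min
    rw [← hsplit, ← hcard] at h ⊢
    nlinarith
  refine Nat.le_of_mul_le_mul_right (c := #(t.erase b)) ?_ (by omega)
  calc #(interedges r s t) * #t' * #(t.erase b)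
      = #(interedges r s t) * #(t.erase b) * #t' := by ring
    _ ≤ #(interedges r s (t.erase b)) * #t * #t' := Nat.mul_le_mul_right _ herase
    _ = #(interedges r s (t.erase b)) * #t' * #t := by ring
    _ ≤ #(interedges r s t') * #(t.erase b) * #t := Nat.mul_le_mul_right _ hdense
    _ = _ := by ring

theorem exists_dense_subset_left [DecidableEq α] (t : Finset β) {m : ℕ} (s : Finset α)
    (hm : m ≤ #s) :
    ∃ s' ⊆ s, #s' = m ∧ #(interedges r s t) * m ≤ #(interedges r s' t) * #s := by
  simpa only [card_interedges_swap] using exists_dense_subset_right (swap r) t s hm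

theorem exists_balanced_dense_subpair [DecidableEq α] [DecidableEq β] {s : Finset α}
    {t : Finset β} (hts : #t ≤ 2 * #s) :
    ∃ s' ⊆ s, ∃ t' ⊆ t, #s' = min #s #t ∧ #t' = min #s #t ∧
      #(interedges r s t) * min #s #t ≤ 2 * #s * #(interedges r s' t') := by
  obtain hst | hts' := le_total #s #t
  · obtain ⟨t', ht', ht'_card, hdense⟩ := exists_dense_subset_right r s t hst
    refine ⟨s, subset_rfl, t', ht', (min_eq_left hst).symm, ht'_card.trans (min_eq_left hst).symm,
      ?_⟩
    rw [min_eq_left hst]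
    nlinarith
  · obtain ⟨s', hs', hs'_card, hdense⟩ := exists_dense_subset_left r t s hts'
    refine ⟨s', hs', t, subset_rfl, hs'_card.trans (min_eq_right hts').symm,
      (min_eq_right hts').symm, ?_⟩
    rw [min_eq_right hts']
    nlinarith

def nbhd (S : Finset α) (t : Finset β) : Finset β := {b ∈ t | ∃ a ∈ S, r a b}

variable {r}

theorem nbhd_subset (S : Finset α) (t : Finset β) : nbhd r S t ⊆ t := filter_subset _ _

theorem nbhd_mono {S S' : Finset α} (h : S ⊆ S') (t : Finset β) : nbhd r S t ⊆ nbhd r S' t :=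
  monotone_filter_right _ fun _ _ ⟨a, ha, hab⟩ ↦ ⟨a, h ha, hab⟩

theorem interedges_nbhd (S : Finset α) (t : Finset β) :
    interedges r S (nbhd r S t) = interedges r S t := by
  ext ⟨a, b⟩
  simp only [mk_mem_interedges_iff, nbhd, mem_filter]
  exact ⟨fun h => ⟨h.1, h.2.1.1, h.2.2⟩, fun h => ⟨h.1, ⟨h.2.1, a, h.1, h.2.2⟩, h.2.2⟩⟩

theorem min_le_card_nbhd_of_small (A : Finset α) (B : Finset β)
    (h : ∀ S ⊆ A, 3 * #S ≤ #A + 2 → 2 * #S ≤ #(nbhd r S B)) (S : Finset α) (hS : S ⊆ A) :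
    min (2 * (#S : ℝ)) (2 * (#A : ℝ) / 3) ≤ #(nbhd r S B) := by
  by_cases hS3 : 3 * #S ≤ #A + 2
  · exact (min_le_left _ _).trans (by exact_mod_cast h S hS hS3)
  obtain ⟨S', hS', hS'_card⟩ := exists_subset_card_eq (s := S) (n := (#A + 2) / 3) (by omega)
  have hA : (#A : ℝ) ≤ 3 * #S' := by norm_cast; omega
  calc min (2 * (#S : ℝ)) (2 * (#A : ℝ) / 3) ≤ 2 * #S' := (min_le_right _ _).trans (by linarith)
    _ ≤ #(nbhd r S' B) := by exact_mod_cast h S' (hS'.trans hS) (by omega)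
    _ ≤ #(nbhd r S B) := by exact_mod_cast card_le_card (nbhd_mono hS' B)

variable (r) in
/-- For a balanced pair with `k` vertices per side and edge density `δ` this is `δ ^ 30 * k`. -/
noncomputable def potential (s : Finset α) (t : Finset β) : ℝ :=
  (#(interedges r s t) : ℝ) ^ 30 / (#s : ℝ) ^ 59

variable {s : Finset α} {t : Finset β}

theorem potential_swap (h : #s = #t) : potential (swap r) t s = potential r s t := by
  rw [potential, potential, card_interedges_swap, h]

theorem potential_le_card (h : #s = #t) : potential r s t ≤ #s := by
  obtain hs | hs := (#s).eq_zero_or_pos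
  · simp [potential, hs]
  rw [potential, div_le_iff₀ (by positivity)]
  have he : (#(interedges r s t) : ℝ) ≤ #s ^ 2 := by
    exact_mod_cast (card_interedges_le_mul r s t).trans_eq (by rw [← h, sq])
  calc (#(interedges r s t) : ℝ) ^ 30 ≤ ((#s : ℝ) ^ 2) ^ 30 := by gcongr
    _ = (#s : ℝ) * #s ^ 59 := by ring

theorem pow_mul_card_le_potential_iff {d : ℝ} (hd : 0 ≤ d) (hs : s.Nonempty) :
    d ^ 30 * #s ≤ potential r s t ↔ d * #s ^ 2 ≤ #(interedges r s t) := by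
  rw [potential, le_div_iff₀ (by have := hs.card_pos; positivity),
    show d ^ 30 * #s * (#s : ℝ) ^ 59 = (d * #s ^ 2) ^ 30 by ring]
  exact pow_le_pow_iff_left₀ (by positivity) (by positivity) (by norm_num)

variable (r) in
structure IsPotentialMax (X : Finset α) (Y : Finset β) : Prop where
  nonempty : X.Nonempty
  card_eq : #X = #Y
  potential_le : ∀ U ⊆ X, ∀ V ⊆ Y, U.Nonempty → #U = #V → potential r U V ≤ potential r X Y

variable (r) in
theorem exists_isPotentialMax (hs : s.Nonempty) (hst : #s = #t) :
    ∃ X ⊆ s, ∃ Y ⊆ t, potential r s t ≤ potential r X Y ∧ IsPotentialMax r X Y := by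
  let pairs := (s.powerset ×ˢ t.powerset).filter fun p => p.1.Nonempty ∧ #p.1 = #p.2
  obtain ⟨⟨X, Y⟩, hXY, hmax⟩ :=
    pairs.exists_max_image (fun p => potential r p.1 p.2) ⟨(s, t), by simp [pairs, hs, hst]⟩
  simp only [pairs, mem_filter, mem_product, mem_powerset] at hXY
  obtain ⟨⟨hXs, hYt⟩, hX, hXY⟩ := hXY
  refine ⟨X, hXs, Y, hYt, hmax (s, t) (by simp [pairs, hs, hst]), hX, hXY, ?_⟩
  intro U hU V hV hUne hUV
  exact hmax (U, V) (by simp [pairs, hU.trans hXs, hV.trans hYt, hUne, hUV])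

namespace IsPotentialMax

variable {X : Finset α} {Y : Finset β} (h : IsPotentialMax r X Y)
include h

theorem swap : IsPotentialMax (swap r) Y X where
  nonempty := card_pos.1 (h.card_eq ▸ h.nonempty.card_pos)
  card_eq := h.card_eq.symm
  potential_le V hV U hU hVne hVU := by
    rw [potential_swap hVU.symm, potential_swap h.card_eq]
    exact h.potential_le U hU V hV (card_pos.1 (hVU ▸ hVne.card_pos)) hVU.symm

theorem pow_mul_le {U : Finset α} {V : Finset β} (hU : U ⊆ X) (hV : V ⊆ Y) (hUne : U.Nonempty)
    (hUV : #U = #V) :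
    (#(interedges r U V) : ℝ) ^ 30 * #X ^ 59 ≤ (#(interedges r X Y) : ℝ) ^ 30 * #U ^ 59 := by
  have := h.potential_le U hU V hV hUne hUV
  rwa [potential, potential, div_le_div_iff₀ (by have := hUne.card_pos; positivity)
    (by have := h.nonempty.card_pos; positivity)] at this

theorem four_mul_le [DecidableEq α] [DecidableEq β] (hk : 1000 ≤ #X) {a : α} (ha : a ∈ X) :
    4 * #(interedges r X Y) ≤ 5 * #X * #(Y.bipartiteAbove r a) := by
  obtain ⟨b, hb, hb_min⟩ := exists_card_mul_card_bipartiteBelow_le r X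
    (card_pos.1 (h.card_eq ▸ h.nonempty.card_pos))
  have hsplit := card_interedges_le_erase_erase r X Y a b
  have hcard : #(X.erase a) = #X - 1 := card_erase_of_mem ha
  have hmax := h.pow_mul_le (erase_subset a X) (erase_subset b Y)
    (card_pos.1 (by omega)) (by rw [hcard, card_erase_of_mem hb, h.card_eq])
  rw [hcard, Nat.cast_sub (by omega), Nat.cast_one] at hmax
  rw [← h.card_eq] at hb_min
  exact_mod_cast four_mul_le_of_pow_mul_le (x := #(Y.bipartiteAbove r a))
    (y := #(X.bipartiteBelow r b)) (by exact_mod_cast hk) (Nat.cast_nonneg _)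
    (by exact_mod_cast hb_min) (by exact_mod_cast hsplit) hmax

theorem two_mul_card_le_card_nbhd [DecidableEq α] [DecidableEq β] (hk : 20 ≤ #X)
    (he : 0 < #(interedges r X Y))
    (hdeg : ∀ a ∈ X, 4 * #(interedges r X Y) ≤ 5 * #X * #(Y.bipartiteAbove r a))
    {S : Finset α} (hS : S ⊆ X) (hS3 : 3 * #S ≤ #X + 2) : 2 * #S ≤ #(nbhd r S Y) := by
  by_contra! hlt
  set e := #(interedges r X Y)
  set T := nbhd r S Y
  have hST : 4 * e * #S ≤ 5 * #X * #(interedges r S T) := by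
    rw [interedges_nbhd, card_interedges_eq_sum_card_bipartiteAbove, mul_sum, mul_comm,
      ← smul_eq_mul, ← sum_const]
    exact sum_le_sum fun a ha => hdeg a (hS ha)
  obtain ⟨U, hU, V, hV, hU_card, hV_card, hUV⟩ := exists_balanced_dense_subpair r hlt.le
  have hS_pos : 0 < #S := by omega
  have hST_pos : 0 < #(interedges r S T) := by
    have : 0 < 4 * e * #S := by positivity
    refine Nat.pos_of_ne_zero fun h0 => ?_
    rw [h0, mul_zero] at hST
    omega
  have hn : 0 < min #S #T := by
    have := card_interedges_le_mul r S T
    refine lt_min hS_pos (Nat.pos_of_ne_zero fun h0 => ?_)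
    rw [h0, mul_zero] at this
    omega
  have hdense : 2 * e * min #S #T ≤ 5 * #X * #(interedges r U V) := by
    refine Nat.le_of_mul_le_mul_right (c := 2 * #S) ?_ (by omega)
    calc 2 * e * min #S #T * (2 * #S) = 4 * e * #S * min #S #T := by ring
      _ ≤ 5 * #X * #(interedges r S T) * min #S #T := Nat.mul_le_mul_right _ hST
      _ ≤ 5 * #X * (2 * #S * #(interedges r U V)) := by rw [mul_assoc]; gcongr
      _ = _ := by ring
  have hmax := h.pow_mul_le (hU.trans hS) (hV.trans (nbhd_subset S Y))
    (card_pos.1 (hU_card ▸ hn)) (hU_card.trans hV_card.symm)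
  rw [hU_card, Nat.cast_min] at hmax
  have hlt' := pow_mul_pow_lt_of_two_mul_le (k := #X) (n := min #S #T) (e := e)
    (e₁ := #(interedges r U V)) (by exact_mod_cast hn) (by norm_cast; omega)
    (by exact_mod_cast he) (by exact_mod_cast hdense)
  linarith

theorem le_card_bipartiteAbove [DecidableEq α] [DecidableEq β] (hk : 1000 ≤ #X) {c : ℝ}
    (hc : c * #X ^ 2 ≤ 4 / 5 * #(interedges r X Y)) {a : α} (ha : a ∈ X) :
    c * #X ≤ #(Y.bipartiteAbove r a) := by
  have hdeg : (4 : ℝ) * #(interedges r X Y) ≤ 5 * #X * #(Y.bipartiteAbove r a) := by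
    exact_mod_cast h.four_mul_le hk ha
  have hk0 : (0 : ℝ) < #X := by exact_mod_cast h.nonempty.card_pos
  refine le_of_mul_le_mul_left ?_ hk0
  nlinarith

theorem min_le_card_nbhd [DecidableEq α] [DecidableEq β] (hk : 1000 ≤ #X)
    (he : 0 < #(interedges r X Y)) (S : Finset α) (hS : S ⊆ X) :
    min (2 * (#S : ℝ)) (2 * #X / 3) ≤ #(nbhd r S Y) :=
  min_le_card_nbhd_of_small X Y (fun _ hS' hS3 =>
    h.two_mul_card_le_card_nbhd (by omega) he (fun _ ha => h.four_mul_le hk ha) hS' hS3) S hS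

end IsPotentialMax

variable (r) in
structure IsRobustlyMatchable (c : ℝ) (A : Finset α) (B : Finset β) : Prop where
  card_eq : #A = #B
  le_card_bipartiteAbove : ∀ a ∈ A, c * #A ≤ #(B.bipartiteAbove r a)
  le_card_bipartiteBelow : ∀ b ∈ B, c * #A ≤ #(A.bipartiteBelow r b)
  min_le_card_nbhd : ∀ S ⊆ A, min (2 * (#S : ℝ)) (2 * #A / 3) ≤ #(nbhd r S B)
  min_le_card_nbhd_swap : ∀ S ⊆ B, min (2 * (#S : ℝ)) (2 * #A / 3) ≤ #(nbhd (swap r) S A)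

theorem isRobustlyMatchable_singleton {a : α} {b : β} (hab : r a b) {c : ℝ} (hc : c ≤ 1) :
    IsRobustlyMatchable r c {a} {b} where
  card_eq := by simp
  le_card_bipartiteAbove _ ha := by simp_all [bipartiteAbove, filter_singleton]
  le_card_bipartiteBelow _ hb := by simp_all [bipartiteBelow, filter_singleton]
  min_le_card_nbhd S hS := by
    obtain rfl | rfl := subset_singleton_iff.1 hS <;> norm_num [nbhd, filter_singleton, hab]
  min_le_card_nbhd_swap S hS := by
    obtain rfl | rfl := subset_singleton_iff.1 hS <;> norm_num [nbhd, filter_singleton, swap, hab]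

theorem IsPotentialMax.isRobustlyMatchable [DecidableEq α] [DecidableEq β] {X : Finset α}
    {Y : Finset β} (h : IsPotentialMax r X Y) (hk : 1000 ≤ #X)
    (he : 0 < #(interedges r X Y)) {c : ℝ} (hc : c * #X ^ 2 ≤ 4 / 5 * #(interedges r X Y)) :
    IsRobustlyMatchable r c X Y where
  card_eq := h.card_eq
  le_card_bipartiteAbove _ := h.le_card_bipartiteAbove hk hc
  le_card_bipartiteBelow b hb := by
    have := h.swap.le_card_bipartiteAbove (h.card_eq ▸ hk)
      (by rwa [card_interedges_swap, ← h.card_eq]) hb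
    rwa [← h.card_eq] at this
  min_le_card_nbhd := h.min_le_card_nbhd hk he
  min_le_card_nbhd_swap := by
    have := h.swap.min_le_card_nbhd (h.card_eq ▸ hk) (by rwa [card_interedges_swap])
    rwa [← h.card_eq] at this

variable (r) in
theorem exists_isRobustlyMatchable_singleton {s : Finset α} {t : Finset β}
    (h : 0 < #(interedges r s t)) {c : ℝ} (hc : c ≤ 1) :
    ∃ a ∈ s, ∃ b ∈ t, IsRobustlyMatchable r c {a} {b} := by
  obtain ⟨⟨a, b⟩, hab⟩ := card_pos.1 h
  obtain ⟨ha, hb, hab⟩ := mk_mem_interedges_iff.1 hab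
  exact ⟨a, ha, b, hb, isRobustlyMatchable_singleton hab hc⟩

variable (r) in
theorem exists_isRobustlyMatchable [DecidableEq α] [DecidableEq β] {s : Finset α}
    {t : Finset β} (hst : #s = #t) {c d : ℝ} (hd : 0 < d) (hc : c ≤ 4 / 5 * d)
    (hlarge : 1000 ≤ d ^ 30 * #s) (hdense : d * #s ^ 2 ≤ #(interedges r s t)) :
    ∃ X ⊆ s, ∃ Y ⊆ t, d ^ 30 * #s ≤ #X ∧ IsRobustlyMatchable r c X Y := by
  have hs : s.Nonempty := card_pos.1 <| Nat.pos_of_ne_zero fun h0 => by norm_num [h0] at hlarge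
  obtain ⟨X, hX, Y, hY, hpot, hmax⟩ := exists_isPotentialMax r hs hst
  have hpot_s := (pow_mul_card_le_potential_iff hd.le hs).2 hdense
  have hk : d ^ 30 * #s ≤ #X := (hpot_s.trans hpot).trans (potential_le_card hmax.card_eq)
  have hdenseX : d * #X ^ 2 ≤ #(interedges r X Y) :=
    (pow_mul_card_le_potential_iff hd.le hmax.nonempty).1 <| calc
      d ^ 30 * #X ≤ d ^ 30 * #s := by gcongr
      _ ≤ potential r X Y := hpot_s.trans hpot
  have hX0 : (0 : ℝ) < #X := by exact_mod_cast hmax.nonempty.card_pos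
  have he : 0 < #(interedges r X Y) := by
    exact_mod_cast (by positivity : (0 : ℝ) < d * #X ^ 2).trans_le hdenseX
  refine ⟨X, hX, Y, hY, hk, hmax.isRobustlyMatchable (by exact_mod_cast hlarge.trans hk) he ?_⟩
  calc c * (#X : ℝ) ^ 2 ≤ 4 / 5 * d * #X ^ 2 := by gcongr
    _ ≤ 4 / 5 * (#(interedges r X Y) : ℝ) := by linarith
end Rel

open Rel in
/-- Lemma 2 (robustly matchable pair): a bipartite graph with parts of size
`n` and at least `d·n²` edges contains an induced balanced pair `(A₁, B₁)`
with `|A₁| = |B₁| ≥ d^{60} n / 3`, minimum degree at least `10⁻³ d |A₁|`, and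
expansion `|N(S)| ≥ min (2|S|, 2|A₁|/3)` for all `S ⊆ A₁` or `S ⊆ B₁`. -/
theorem robustly_matchable_pair :
    ∃ N : ℕ, ∀ n : ℕ, N ≤ n →
      ∀ (α β : Type) [Fintype α] [Fintype β] [DecidableEq α] [DecidableEq β],
        Fintype.card α = n → Fintype.card β = n →
      ∀ E : α → β → Bool,
      ∀ d : ℝ, 0 < d → d ≤ 1 →
        d * (n : ℝ) ^ 2 ≤
          (((Finset.univ : Finset (α × β)).filter fun p => E p.1 p.2).card : ℝ) →
        ∃ (A₁ : Finset α) (B₁ : Finset β),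
          A₁.card = B₁.card ∧
          d ^ 60 * n / 3 ≤ (A₁.card : ℝ) ∧
          (∀ a ∈ A₁,
            (10 : ℝ) ^ (-3 : ℤ) * d * A₁.card ≤ ((B₁.filter fun b => E a b).card : ℝ)) ∧
          (∀ b ∈ B₁,
            (10 : ℝ) ^ (-3 : ℤ) * d * A₁.card ≤ ((A₁.filter fun a => E a b).card : ℝ)) ∧
          (∀ S ⊆ A₁,
            min (2 * (S.card : ℝ)) (2 * (A₁.card : ℝ) / 3) ≤
              ((B₁.filter fun b => ∃ a ∈ S, E a b).card : ℝ)) ∧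
          (∀ S ⊆ B₁,
            min (2 * (S.card : ℝ)) (2 * (A₁.card : ℝ) / 3) ≤
              ((A₁.filter fun a => ∃ b ∈ S, E a b).card : ℝ)) := by
  refine ⟨10 ^ 6, fun n hN α β _ _ _ _ hα hβ E d hd hd1 hE => ?_⟩
  let r : α → β → Prop := fun a b => E a b
  suffices ∃ (A : Finset α) (B : Finset β),
      d ^ 60 * n / 3 ≤ (#A : ℝ) ∧ IsRobustlyMatchable r (10 ^ (-3 : ℤ) * d) A B by
    obtain ⟨A, B, hsize, h⟩ := this
    exact ⟨A, B, h.card_eq, hsize, h.le_card_bipartiteAbove, h.le_card_bipartiteBelow,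
      h.min_le_card_nbhd, h.min_le_card_nbhd_swap⟩
  have hn : (#(univ : Finset α) : ℝ) = n := by rw [card_univ, hα]
  have hE' : d * (#(univ : Finset α) : ℝ) ^ 2 ≤ #(interedges r univ univ) := by
    rw [hn, interedges, univ_product_univ]
    exact hE
  have hc : (10 : ℝ) ^ (-3 : ℤ) * d ≤ 4 / 5 * d := by norm_num [zpow_neg]; linarith
  by_cases hsmall : d ^ 60 * n ≤ 3
  · have hpos : 0 < #(interedges r univ univ) := by
      have : (0 : ℝ) < n := by norm_cast; omega
      exact_mod_cast (by positivity : (0 : ℝ) < d * n ^ 2).trans_le (hn ▸ hE')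
    obtain ⟨a, -, b, -, h⟩ := exists_isRobustlyMatchable_singleton r hpos (hc.trans (by linarith))
    exact ⟨{a}, {b}, by simp only [card_singleton, Nat.cast_one]; linarith, h⟩
  obtain ⟨X, -, Y, -, hX, h⟩ := exists_isRobustlyMatchable r
    (by rw [card_univ, card_univ, hα, hβ]) hd hc
    (hn ▸ thousand_le_pow_mul hd.le (by exact_mod_cast hN) (not_le.1 hsmall)) hE'
  have hd60 : d ^ 60 * n ≤ d ^ 30 * n :=
    mul_le_mul_of_nonneg_right (pow_le_pow_of_le_one hd.le hd1 (by norm_num)) n.cast_nonneg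
  refine ⟨X, Y, ?_, h⟩
  have : 0 ≤ d ^ 60 * n := by positivity
  linarith [hn ▸ hX]
end

section
/- Let G be a bipartite graph with parts A, B of equal size m, let ε = 1/10, and suppose that for all A' ⊆ A, B' ⊆ B with |A'| ≥ ε·m and |B'| ≥ ε·m we have e_G(A',B') ≥ δ·|A'|·|B'|. Then there exist A₁ ⊆ A and B₁ ⊆ B with |A₁| = |B₁| > (1−3ε)·m such that G[A₁,B₁] has minimum degree at least (δ/20)·m and satisfies: for every S ⊆ A₁ or S ⊆ B₁ with |S| < ε·m, |N(S)| ≥ 2|S|, and for every such S with |S| ≥ ε·m, |N(S)| ≥ |B₁| − ε·m. -/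
/-!
Greedy pruning. As long as some vertex has fewer than `δm/20` neighbours across, or some set
`S` with `|S| < εm` has `|N(S)| < 2|S|`, discard it, together with as many arbitrary vertices
of the other side to keep the two sides balanced. The vertices `W` discarded from one side send
few edges to the remaining other side outside the union `X` of the neighbourhoods of the
discarded sets, and `|X| ≤ 2|W|`; density therefore keeps `|W| < εm` throughout, so each side
loses fewer than `2εm` vertices. When the process stops, minimum degree and expansion of small
sets hold by construction, and a large set `S` misses fewer than `εm` vertices, since density
puts an edge between `S` and any `εm` of its non-neighbours.
-/

open Finset Rel

section Pruning

variable {α β : Type*} (r : α → β → Prop) [∀ a, DecidablePred (r a)]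

/-- `(ε, δ)`-density, with the threshold `t = ε m`. -/
def IsDenseAbove (t δ : ℝ) : Prop :=
  ∀ (s : Finset α) (u : Finset β), t ≤ #s → t ≤ #u →
    δ * #s * #u ≤ #(interedges r s u)

def nbhdIn (s : Finset α) (u : Finset β) : Finset β := {b ∈ u | ∃ a ∈ s, r a b}

def HasMinDegree (κ : ℝ) (A : Finset α) (B : Finset β) : Prop :=
  ∀ a ∈ A, κ ≤ #{b ∈ B | r a b}

def Expands (t : ℝ) (A : Finset α) (B : Finset β) : Prop :=
  ∀ S ⊆ A, ((#S : ℝ) < t → 2 * (#S : ℝ) ≤ #(nbhdIn r S B)) ∧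
    (t ≤ #S → (#B : ℝ) - t ≤ #(nbhdIn r S B))

variable {r}

lemma card_interedges_swap (s : Finset α) (u : Finset β) :
    #(interedges (fun b a => r a b) u s) = #(interedges r s u) :=
  card_nbij' Prod.swap Prod.swap (fun x hx => by simp_all [mem_interedges_iff])
    (fun x hx => by simp_all [mem_interedges_iff]) (fun x _ => x.swap_swap) (fun x _ => x.swap_swap)

namespace IsDenseAbove

variable {t δ : ℝ}

lemma swap (hd : IsDenseAbove r t δ) : IsDenseAbove (fun b a => r a b) t δ := by
  intro u s hu hs
  rw [card_interedges_swap, mul_right_comm]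
  exact hd s u hs hu

lemma le_one (hd : IsDenseAbove r t δ) {s : Finset α} {u : Finset β} (hs : s.Nonempty)
    (hu : u.Nonempty) (hts : t ≤ #s) (htu : t ≤ #u) : δ ≤ 1 := by
  have hpos : (0 : ℝ) < #s * #u := by positivity
  have hle : (#(interedges r s u) : ℝ) ≤ #s * #u := by
    exact_mod_cast card_interedges_le_mul r s u
  nlinarith [hd s u hts htu]

end IsDenseAbove

variable [DecidableEq β]

lemma interedges_sdiff_nbhdIn (s : Finset α) (u : Finset β) :
    interedges r s (u \ nbhdIn r s u) = ∅ := by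
  ext ⟨a, b⟩
  simp only [mem_interedges_iff, nbhdIn, mem_sdiff, mem_filter, notMem_empty, iff_false]
  rintro ⟨ha, ⟨hb, hn⟩, hr⟩
  exact hn ⟨hb, a, ha, hr⟩

/-- The non-neighbours of a large set span no edges with it, so by density there are fewer
than `t` of them. -/
lemma IsDenseAbove.card_sub_le_card_nbhdIn {t δ : ℝ} (hd : IsDenseAbove r t δ) (hδ : 0 < δ)
    (ht : 0 < t) {s : Finset α} (hs : t ≤ #s) (u : Finset β) :
    (#u : ℝ) - t ≤ #(nbhdIn r s u) := by
  have hmiss : (#(u \ nbhdIn r s u) : ℝ) < t := by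
    by_contra! h
    have hdense := hd s _ hs h
    rw [interedges_sdiff_nbhdIn, card_empty, Nat.cast_zero] at hdense
    have : (0 : ℝ) < #s := ht.trans_le hs
    have : (0 : ℝ) < #(u \ nbhdIn r s u) := ht.trans_le h
    have : (0 : ℝ) < δ * #s * #(u \ nbhdIn r s u) := by positivity
    linarith
  have hsplit : (#(u \ nbhdIn r s u) : ℝ) + #(nbhdIn r s u) = #u := by
    exact_mod_cast card_sdiff_add_card_eq_card (filter_subset _ _)
  linarith

variable (r)

/-- The invariant kept for the vertices `W` discarded from one side; `X` collects the
neighbourhoods of the discarded non-expanding sets. -/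
structure Discarded (κ : ℝ) (B : Finset β) (W : Finset α) (X : Finset β) : Prop where
  card_le : #X ≤ 2 * #W
  card_interedges_le : (#(interedges r W (B \ X)) : ℝ) ≤ #W * κ

def Prunable (t κ : ℝ) (A : Finset α) (B : Finset β) : Prop :=
  ∃ S ⊆ A, S.Nonempty ∧ (#S : ℝ) ≤ t ∧
    ∃ N : Finset β, #N ≤ 2 * #S ∧ (#(interedges r S (B \ N)) : ℝ) ≤ #S * κ

variable {r}

namespace Discarded

variable {κ : ℝ} {B B' : Finset β} {W : Finset α} {X : Finset β}

lemma empty : Discarded r κ B ∅ ∅ := ⟨by simp, by simp⟩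

lemma mono (hD : Discarded r κ B W X) (h : B' ⊆ B) : Discarded r κ B' W X where
  card_le := hD.card_le
  card_interedges_le := le_trans
    (by gcongr; exact interedges_mono subset_rfl (sdiff_subset_sdiff h subset_rfl))
    hD.card_interedges_le

/-- If `|W| ≥ t`, density would force more than `κ |W|` edges between `W` and `B \ X`. -/
lemma card_lt {t δ : ℝ} (hD : Discarded r κ B W X) (hd : IsDenseAbove r t δ) (hδ : 0 ≤ δ)
    (ht : 0 < t) (hB : t ≤ #B - 2 * #W) (hκ : κ < δ * (#B - 2 * #W)) : (#W : ℝ) < t := by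
  have hT : (#B : ℝ) - 2 * #W ≤ #(B \ X) := by
    have h1 : (#B : ℝ) ≤ #(B \ X) + #X := by exact_mod_cast card_le_card_sdiff_add_card
    have h2 : (#X : ℝ) ≤ 2 * #W := by exact_mod_cast hD.card_le
    linarith
  by_contra! hW
  have hdense := hd W (B \ X) hW (hB.trans hT)
  have hWpos : (0 : ℝ) < #W := ht.trans_le hW
  nlinarith [hD.card_interedges_le, mul_le_mul_of_nonneg_left hT hδ]

variable [DecidableEq α] {S : Finset α} {N : Finset β}

lemma union (hD : Discarded r κ B W X) (hWS : Disjoint W S) (hN : #N ≤ 2 * #S)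
    (hS : (#(interedges r S (B \ N)) : ℝ) ≤ #S * κ) :
    Discarded r κ B (W ∪ S) (X ∪ N) where
  card_le := by
    have := card_union_le X N
    have := hD.card_le
    rw [card_union_of_disjoint hWS]
    omega
  card_interedges_le := by
    have hsub : interedges r (W ∪ S) (B \ (X ∪ N)) ⊆
        interedges r W (B \ X) ∪ interedges r S (B \ N) := by
      intro x
      simp only [mem_union, mem_sdiff, mem_interedges_iff]
      tauto
    have : (#(interedges r (W ∪ S) (B \ (X ∪ N))) : ℝ) ≤
        #(interedges r W (B \ X)) + #(interedges r S (B \ N)) := by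
      exact_mod_cast (card_le_card hsub).trans (card_union_le _ _)
    rw [card_union_of_disjoint hWS, Nat.cast_add]
    linarith [hD.card_interedges_le]

end Discarded

variable {t κ : ℝ} {A : Finset α} {B : Finset β}

/-- A small set `S` with `|N(S)| < 2 |S|` is prunable, with exceptional set `N(S)`. -/
lemma expands_of_not_prunable {δ : ℝ} (hd : IsDenseAbove r t δ) (hδ : 0 < δ) (ht : 0 < t)
    (hκ : 0 ≤ κ) (h : ¬ Prunable r t κ A B) : Expands r t A B := by
  intro S hS
  refine ⟨fun hSt => ?_, fun hSt => hd.card_sub_le_card_nbhdIn hδ ht hSt B⟩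
  by_contra! hlt
  have hne : S.Nonempty := by
    rw [← card_pos, ← Nat.cast_pos (α := ℝ)]
    linarith [(#(nbhdIn r S B)).cast_nonneg (α := ℝ)]
  refine h ⟨S, hS, hne, hSt.le, nbhdIn r S B, by exact_mod_cast hlt.le, ?_⟩
  rw [interedges_sdiff_nbhdIn, card_empty, Nat.cast_zero]
  positivity

variable [DecidableEq α]

lemma card_interedges_singleton_left (a : α) (u : Finset β) :
    #(interedges r {a} u) = #{b ∈ u | r a b} := by
  simp [interedges_eq_biUnion]

lemma hasMinDegree_of_not_prunable (ht : 1 ≤ t) (h : ¬ Prunable r t κ A B) :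
    HasMinDegree r κ A B := by
  intro a ha
  by_contra! hlt
  refine h ⟨{a}, singleton_subset_iff.2 ha, singleton_nonempty a, by simpa using ht, ∅,
    by simp, ?_⟩
  rw [sdiff_empty, card_interedges_singleton_left, card_singleton, Nat.cast_one, one_mul]
  exact hlt.le

variable (r) in
/-- A stage of the pruning: `A`, `B` remain, and `WA ⊆ α`, `WB ⊆ β` have been discarded, with
exceptional sets `XA ⊆ β`, `XB ⊆ α`. The other removed vertices were removed only to keep
`|A| = |B|`. -/
structure PruningState (t κ : ℝ) (A : Finset α) (B : Finset β) (WA : Finset α)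
    (XA : Finset β) (WB : Finset β) (XB : Finset α) : Prop where
  card_eq : #A = #B
  card_add : (#A : ℝ) + #WA + #WB = 10 * t
  disjoint_left : Disjoint A WA
  disjoint_right : Disjoint B WB
  card_left_lt : (#WA : ℝ) < t
  card_right_lt : (#WB : ℝ) < t
  discarded_left : Discarded r κ B WA XA
  discarded_right : Discarded (fun b a => r a b) κ A WB XB

namespace PruningState

variable {WA XB : Finset α} {WB XA : Finset β}

lemma start (hAB : #A = #B) (hA : (#A : ℝ) = 10 * t) (ht : 0 < t) :
    PruningState r t κ A B ∅ ∅ ∅ ∅ :=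
  ⟨hAB, by simpa using hA, disjoint_empty_right _, disjoint_empty_right _, by simpa using ht,
    by simpa using ht, Discarded.empty, Discarded.empty⟩

lemma swap (h : PruningState r t κ A B WA XA WB XB) :
    PruningState (fun b a => r a b) t κ B A WB XB WA XA where
  card_eq := h.card_eq.symm
  card_add := by
    have : (#A : ℝ) = #B := by exact_mod_cast h.card_eq
    linarith [h.card_add]
  disjoint_left := h.disjoint_right
  disjoint_right := h.disjoint_left
  card_left_lt := h.card_right_lt
  card_right_lt := h.card_left_lt
  discarded_left := h.discarded_right
  discarded_right := h.discarded_left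

/-- Pruning `S` from `A` together with any `|S|` vertices of `B` preserves the invariants:
the discarded side now has fewer than `2t` vertices, which leaves more than `3t` vertices of
`B` outside its exceptional set, so `Discarded.card_lt` applies. -/
lemma prune {δ : ℝ} (h : PruningState r t κ A B WA XA WB XB) (hd : IsDenseAbove r t δ)
    (hδ : 0 < δ) (hκ : κ ≤ 3 * δ * t) {S : Finset α} {N : Finset β} (hSA : S ⊆ A)
    (hSt : (#S : ℝ) ≤ t) (hN : #N ≤ 2 * #S)
    (hSN : (#(interedges r S (B \ N)) : ℝ) ≤ #S * κ) :
    ∃ P ⊆ B, #P = #S ∧ PruningState r t κ (A \ S) (B \ P) (WA ∪ S) (XA ∪ N) WB XB := by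
  obtain ⟨P, hPB, hPS⟩ := exists_subset_card_eq ((card_le_card hSA).trans h.card_eq.le)
  have hWS : Disjoint WA S := (h.disjoint_left.mono_left hSA).symm
  have hD : Discarded r κ (B \ P) (WA ∪ S) (XA ∪ N) :=
    (h.discarded_left.union hWS hN hSN).mono sdiff_subset
  have hcardA : #(A \ S) + #S = #A := card_sdiff_add_card_eq_card hSA
  have hcardB : #(B \ P) + #P = #B := card_sdiff_add_card_eq_card hPB
  have hcardA' : (#(A \ S) : ℝ) + #S = #A := by exact_mod_cast hcardA
  have hcardB' : (#(B \ P) : ℝ) + #S = #A := by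
    rw [← hPS]; exact_mod_cast hcardB.trans h.card_eq.symm
  have hcardW : (#(WA ∪ S) : ℝ) = #WA + #S := by exact_mod_cast card_union_of_disjoint hWS
  have hroom : 3 * t < #(B \ P) - 2 * #(WA ∪ S) := by
    linarith [h.card_add, h.card_left_lt, h.card_right_lt]
  have ht : 0 < t := (Nat.cast_nonneg _).trans_lt h.card_right_lt
  have hAB := h.card_eq
  refine ⟨P, hPB, hPS, ⟨by omega, by linarith [h.card_add], ?_, ?_, ?_, h.card_right_lt, hD,
    h.discarded_right.mono sdiff_subset⟩⟩
  · exact disjoint_union_right.2 ⟨h.disjoint_left.mono_left sdiff_subset, sdiff_disjoint⟩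
  · exact h.disjoint_right.mono_left sdiff_subset
  · refine hD.card_lt hd hδ.le ht (by linarith) (hκ.trans_lt ?_)
    rw [show 3 * δ * t = δ * (3 * t) by ring]
    exact mul_lt_mul_of_pos_left hroom hδ

theorem exists_robust {δ : ℝ} {A : Finset α} {B : Finset β} {WA XB : Finset α}
    {WB XA : Finset β} (h : PruningState r t κ A B WA XA WB XB) (hd : IsDenseAbove r t δ)
    (hδ : 0 < δ) (ht : 1 ≤ t) (hκ₀ : 0 ≤ κ) (hκ : κ ≤ 3 * δ * t) :
    ∃ (A' : Finset α) (B' : Finset β), #A' = #B' ∧ 8 * t < #A' ∧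
      HasMinDegree r κ A' B' ∧ HasMinDegree (fun b a => r a b) κ B' A' ∧
      Expands r t A' B' ∧ Expands (fun b a => r a b) t B' A' := by
  by_cases hA : Prunable r t κ A B
  · obtain ⟨S, hSA, hSne, hSt, N, hN, hSN⟩ := hA
    obtain ⟨P, -, -, h'⟩ := h.prune hd hδ hκ hSA hSt hN hSN
    have : #(A \ S) < #A := card_lt_card (sdiff_ssubset hSA hSne)
    exact h'.exists_robust hd hδ ht hκ₀ hκ
  by_cases hB : Prunable (fun b a => r a b) t κ B A
  · obtain ⟨S, hSB, hSne, hSt, N, hN, hSN⟩ := hB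
    obtain ⟨P, hPA, hPS, h'⟩ := h.swap.prune hd.swap hδ hκ hSB hSt hN hSN
    have : #(A \ P) < #A := card_lt_card (sdiff_ssubset hPA (card_pos.1 (hPS ▸ hSne.card_pos)))
    exact h'.swap.exists_robust hd hδ ht hκ₀ hκ
  refine ⟨A, B, h.card_eq, by linarith [h.card_add, h.card_left_lt, h.card_right_lt],
    hasMinDegree_of_not_prunable ht hA, hasMinDegree_of_not_prunable ht hB,
    expands_of_not_prunable hd hδ (by linarith) hκ₀ hA,
    expands_of_not_prunable hd.swap hδ (by linarith) hκ₀ hB⟩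
termination_by #A

end PruningState

end Pruning

/-- From an `(ε, δ)`-dense balanced bipartite graph (with `ε = 1/10`) one can
extract a balanced pair `(A₁, B₁)` of size `> (1 − 3ε)m` whose induced graph
has minimum degree at least `(δ/20)·m`, expands small sets by a factor `2`,
and has `|N(S)| ≥ |B₁| − ε·m` for all large sets `S`. -/
theorem dense_gives_robust_pair
    (α β : Type) [Fintype α] [Fintype β] [DecidableEq α] [DecidableEq β]
    (m : ℕ) (hα : Fintype.card α = m) (hβ : Fintype.card β = m)
    (E : α → β → Bool) (δ : ℝ) (hδ : 0 < δ) (hδm : 100 ≤ δ * m)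
    (hdense : ∀ (A' : Finset α) (B' : Finset β),
      (1 / 10 : ℝ) * m ≤ A'.card → (1 / 10 : ℝ) * m ≤ B'.card →
      δ * A'.card * B'.card ≤ (((A' ×ˢ B').filter fun p => E p.1 p.2).card : ℝ)) :
    ∃ (A₁ : Finset α) (B₁ : Finset β),
      A₁.card = B₁.card ∧
      (1 - 3 * (1 / 10 : ℝ)) * m < (A₁.card : ℝ) ∧
      (∀ a ∈ A₁, δ / 20 * m ≤ ((B₁.filter fun b => E a b).card : ℝ)) ∧
      (∀ b ∈ B₁, δ / 20 * m ≤ ((A₁.filter fun a => E a b).card : ℝ)) ∧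
      (∀ S ⊆ A₁,
        ((S.card : ℝ) < (1 / 10 : ℝ) * m →
          2 * (S.card : ℝ) ≤ ((B₁.filter fun b => ∃ a ∈ S, E a b).card : ℝ)) ∧
        ((1 / 10 : ℝ) * m ≤ (S.card : ℝ) →
          (B₁.card : ℝ) - (1 / 10 : ℝ) * m ≤
            ((B₁.filter fun b => ∃ a ∈ S, E a b).card : ℝ))) ∧
      (∀ S ⊆ B₁,
        ((S.card : ℝ) < (1 / 10 : ℝ) * m →
          2 * (S.card : ℝ) ≤ ((A₁.filter fun a => ∃ b ∈ S, E a b).card : ℝ)) ∧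
        ((1 / 10 : ℝ) * m ≤ (S.card : ℝ) →
          (B₁.card : ℝ) - (1 / 10 : ℝ) * m ≤
            ((A₁.filter fun a => ∃ b ∈ S, E a b).card : ℝ))) := by
  have hd : IsDenseAbove (fun a b => E a b) ((1 / 10 : ℝ) * m) δ := hdense
  have hm₀ : (0 : ℝ) < m := by
    by_contra! h
    nlinarith [Nat.cast_nonneg (α := ℝ) m]
  have hα' : (#(univ : Finset α) : ℝ) = m := by rw [card_univ, hα]
  have hβ' : (#(univ : Finset β) : ℝ) = m := by rw [card_univ, hβ]
  have hδ₁ : δ ≤ 1 :=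
    hd.le_one (card_pos.1 (by exact_mod_cast hα'.trans_gt hm₀))
      (card_pos.1 (by exact_mod_cast hβ'.trans_gt hm₀)) (by linarith) (by linarith)
  have hm : (100 : ℝ) ≤ m := by nlinarith
  have hstart : PruningState (fun a b => E a b) ((1 / 10 : ℝ) * m) (δ / 20 * m) univ univ
      ∅ ∅ ∅ ∅ :=
    .start (by rw [card_univ, card_univ, hα, hβ]) (by rw [hα']; ring) (by positivity)
  obtain ⟨A₁, B₁, hcard, hsize, hdegA, hdegB, hexpA, hexpB⟩ :=
    hstart.exists_robust hd hδ (by linarith) (by positivity) (by nlinarith)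
  refine ⟨A₁, B₁, hcard, by linarith, hdegA, hdegB, hexpA, ?_⟩
  rw [← hcard]
  exact hexpB
end

section
/- If a properly edge-coloured bipartite graph G with parts A, B contains a matching M together with, for each edge uv ∈ M in some set R, an 'augmenting' replacement structure (delete one edge of M, add two edges to vertices outside V(M) using new colours, then iteratively repair colour conflicts, each repair having more available choices than the number of forbidden ones), then G contains a rainbow matching strictly larger than M. In particular: if M is a rainbow matching in G, ab ∈ M, and there exist a₀ ∉ V(M), b₀ ∉ V(M) with edges a₀b, ab₀ ∈ G whose colours are not used by M, then (M \ {ab}) ∪ {a₀b, ab₀} is a rainbow matching of size |M| + 1. -/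
/-!
Removing `ab` frees the vertices `a` and `b` and the colour of `ab`; the two new edges `a₀b` and
`ab₀` reuse `b` and `a` respectively, while their other endpoints and their colours are fresh, so
each of the three injectivity conditions survives, and the size grows by `2 - 1 = 1`.
-/

namespace Set

variable {γ δ : Type*} {f : γ → δ} {s t : Set γ} {x y z : γ}

theorem InjOn.apply_notMem_image_sdiff_singleton (hf : InjOn f s) (hz : z ∈ s) :
    f z ∉ f '' (s \ {z}) := by
  rw [hf.mem_image_iff sdiff_subset hz]
  exact fun h => h.2 rfl

theorem notMem_image_of_forall_ne {v : δ} (h : ∀ p ∈ s, f p ≠ v) : v ∉ f '' s :=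
  fun ⟨p, hp, hpv⟩ => h p hp hpv

theorem InjOn.insert_insert (ht : InjOn f t) (hx : f x ∉ f '' t) (hy : f y ∉ f '' t)
    (hxy : f x ≠ f y) : InjOn f (insert x (insert y t)) := by
  have hyt : y ∉ t := fun h => hy (mem_image_of_mem f h)
  have hx' : f x ∉ f '' insert y t := by
    rw [image_insert_eq, mem_insert_iff]
    exact not_or_intro hxy hx
  rw [injOn_insert fun h => hx' (mem_image_of_mem f h), injOn_insert hyt]
  exact ⟨⟨ht, hy⟩, hx'⟩

end Set

theorem Finset.card_insert_insert_erase {γ : Type*} [DecidableEq γ] {s : Finset γ} {x y z : γ}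
    (hz : z ∈ s) (hx : x ∉ s) (hy : y ∉ s) (hxy : x ≠ y) :
    (insert x (insert y (s.erase z))).card = s.card + 1 := by
  have hy' : y ∉ s.erase z := fun h => hy (mem_of_mem_erase h)
  have hx' : x ∉ insert y (s.erase z) := by
    rw [mem_insert, not_or]
    exact ⟨hxy, fun h => hx (mem_of_mem_erase h)⟩
  rw [card_insert_of_notMem hx', card_insert_of_notMem hy', card_erase_of_mem hz,
    Nat.sub_add_cancel (card_pos.mpr ⟨z, hz⟩)]

structure IsRainbowMatching {α β γ : Type*} (E : α → β → Bool) (c : α → β → γ)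
    (M : Set (α × β)) : Prop where
  adj : ∀ p ∈ M, E p.1 p.2 = true
  injOn_fst : M.InjOn Prod.fst
  injOn_snd : M.InjOn Prod.snd
  injOn_colour : M.InjOn fun p => c p.1 p.2

namespace IsRainbowMatching

open Set

variable {α β γ : Type*} {E : α → β → Bool} {c : α → β → γ} {M : Set (α × β)}
  {a a₀ : α} {b b₀ : β}

theorem augment (hM : IsRainbowMatching E c M) (hab : (a, b) ∈ M)
    (ha₀ : ∀ p ∈ M, p.1 ≠ a₀) (hb₀ : ∀ p ∈ M, p.2 ≠ b₀)
    (he1 : E a₀ b = true) (he2 : E a b₀ = true)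
    (hc1 : ∀ p ∈ M, c p.1 p.2 ≠ c a₀ b) (hc2 : ∀ p ∈ M, c p.1 p.2 ≠ c a b₀)
    (hc12 : c a₀ b ≠ c a b₀) :
    IsRainbowMatching E c (insert (a₀, b) (insert (a, b₀) (M \ {(a, b)}))) := by
  have ha₀a : a₀ ≠ a := (ha₀ _ hab).symm
  have hbb₀ : b ≠ b₀ := hb₀ _ hab
  refine ⟨?_, ?_, ?_, ?_⟩
  · rintro p (rfl | rfl | hp)
    exacts [he1, he2, hM.adj p hp.1]
  · exact (hM.injOn_fst.mono sdiff_subset).insert_insert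
      (notMem_image_of_forall_ne fun p hp => ha₀ p hp.1)
      (hM.injOn_fst.apply_notMem_image_sdiff_singleton hab) ha₀a
  · exact (hM.injOn_snd.mono sdiff_subset).insert_insert
      (hM.injOn_snd.apply_notMem_image_sdiff_singleton hab)
      (notMem_image_of_forall_ne fun p hp => hb₀ p hp.1) hbb₀
  · exact (hM.injOn_colour.mono sdiff_subset).insert_insert
      (notMem_image_of_forall_ne fun p hp => hc1 p hp.1)
      (notMem_image_of_forall_ne fun p hp => hc2 p hp.1) hc12

end IsRainbowMatching

theorem rainbow_matching_augment_general
    (α β : Type) [DecidableEq α] [DecidableEq β]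
    (E : α → β → Bool) (c : α → β → ℕ)
    (M : Finset (α × β))
    (hME : ∀ p ∈ M, E p.1 p.2 = true)
    (hM1 : Set.InjOn (Prod.fst : α × β → α) ↑M)
    (hM2 : Set.InjOn (Prod.snd : α × β → β) ↑M)
    (hMrb : Set.InjOn (fun p : α × β => c p.1 p.2) (↑M : Set (α × β)))
    (a : α) (b : β) (hab : (a, b) ∈ M)
    (a₀ : α) (b₀ : β)
    (ha₀ : ∀ p ∈ M, p.1 ≠ a₀) (hb₀ : ∀ p ∈ M, p.2 ≠ b₀)
    (he1 : E a₀ b = true) (he2 : E a b₀ = true)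
    (hc1 : ∀ p ∈ M, c p.1 p.2 ≠ c a₀ b)
    (hc2 : ∀ p ∈ M, c p.1 p.2 ≠ c a b₀)
    (hc12 : c a₀ b ≠ c a b₀) :
    (insert (a₀, b) (insert (a, b₀) (M.erase (a, b)))).card = M.card + 1 ∧
    (∀ p ∈ insert (a₀, b) (insert (a, b₀) (M.erase (a, b))), E p.1 p.2 = true) ∧
    Set.InjOn (Prod.fst : α × β → α)
      ↑(insert (a₀, b) (insert (a, b₀) (M.erase (a, b)))) ∧
    Set.InjOn (Prod.snd : α × β → β)
      ↑(insert (a₀, b) (insert (a, b₀) (M.erase (a, b)))) ∧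
    Set.InjOn (fun p : α × β => c p.1 p.2)
      (↑(insert (a₀, b) (insert (a, b₀) (M.erase (a, b)))) : Set (α × β)) := by
  have hM : IsRainbowMatching E c (M : Set (α × β)) := ⟨hME, hM1, hM2, hMrb⟩
  have hM' := hM.augment hab ha₀ hb₀ he1 he2 hc1 hc2 hc12
  rw [← Finset.coe_erase, ← Finset.coe_insert, ← Finset.coe_insert] at hM'
  have hcard := Finset.card_insert_insert_erase (x := (a₀, b)) (y := (a, b₀)) hab
    (fun h => ha₀ _ h rfl) (fun h => hb₀ _ h rfl)
    fun h => ha₀ _ hab (congrArg Prod.fst h).symm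
  exact ⟨hcard, hM'.adj, hM'.injOn_fst, hM'.injOn_snd, hM'.injOn_colour⟩

/-- Elementary augmentation step: if `M` is a rainbow matching in a properly
edge-coloured bipartite graph, `ab ∈ M`, and `a₀, b₀` are vertices uncovered
by `M` such that `a₀b` and `ab₀` are edges whose colours are distinct from
each other and unused by `M`, then `(M \ {ab}) ∪ {a₀b, ab₀}` is a rainbow
matching of size `|M| + 1`. -/
theorem rainbow_matching_augment
    (α β : Type) [DecidableEq α] [DecidableEq β]
    (E : α → β → Bool) (c : α → β → ℕ)
    (hproperA : ∀ a b b', E a b → E a b' → b ≠ b' → c a b ≠ c a b')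
    (hproperB : ∀ a a' b, E a b → E a' b → a ≠ a' → c a b ≠ c a' b)
    (M : Finset (α × β))
    (hME : ∀ p ∈ M, E p.1 p.2 = true)
    (hM1 : Set.InjOn (Prod.fst : α × β → α) ↑M)
    (hM2 : Set.InjOn (Prod.snd : α × β → β) ↑M)
    (hMrb : Set.InjOn (fun p : α × β => c p.1 p.2) (↑M : Set (α × β)))
    (a : α) (b : β) (hab : (a, b) ∈ M)
    (a₀ : α) (b₀ : β)
    (ha₀ : ∀ p ∈ M, p.1 ≠ a₀) (hb₀ : ∀ p ∈ M, p.2 ≠ b₀)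
    (he1 : E a₀ b = true) (he2 : E a b₀ = true)
    (hc1 : ∀ p ∈ M, c p.1 p.2 ≠ c a₀ b)
    (hc2 : ∀ p ∈ M, c p.1 p.2 ≠ c a b₀)
    (hc12 : c a₀ b ≠ c a b₀) :
    (insert (a₀, b) (insert (a, b₀) (M.erase (a, b)))).card = M.card + 1 ∧
    (∀ p ∈ insert (a₀, b) (insert (a, b₀) (M.erase (a, b))), E p.1 p.2 = true) ∧
    Set.InjOn (Prod.fst : α × β → α)
      ↑(insert (a₀, b) (insert (a, b₀) (M.erase (a, b)))) ∧
    Set.InjOn (Prod.snd : α × β → β)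
      ↑(insert (a₀, b) (insert (a, b₀) (M.erase (a, b)))) ∧
    Set.InjOn (fun p : α × β => c p.1 p.2)
      (↑(insert (a₀, b) (insert (a, b₀) (M.erase (a, b)))) : Set (α × β)) :=
  rainbow_matching_augment_general α β E c M hME hM1 hM2 hMrb a b hab a₀ b₀ ha₀ hb₀ he1 he2 hc1 hc2
    hc12
end
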